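/- arXiv:1612.08400 — 7 statements merged into one kernel-verified Lean document; each statement's English description precedes it below -/
import Mathlib

section
/- Let φ : Ω × ℝⁿ → ℝ be continuous with ξ ↦ φ(x,ξ) a norm for each x, and let V ∈ (L^∞(Ω))ⁿ satisfy φ⁰(x,V(x)) > 1 on a set ω ⊂ Ω of positive Lebesgue measure. Then there exist a point z ∈ ω, a unit vector P ∈ ℝⁿ, ε > 0, and a measurable set Q ⊆ B(z,ε) ∩ ω of positive measure such that φ(y,P) < V(y)·P for all y ∈ Q. -/
open MeasureTheory
open scoped RealInnerProductSpace ENNReal Topology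

noncomputable section

abbrev Euc (n : ℕ) := EuclideanSpace ℝ (Fin n)

/-- `φ x` is a norm on `ℝⁿ`. -/
def IsNormAt {n : ℕ} (φ : Euc n → Euc n → ℝ) (x : Euc n) : Prop :=
  (∀ ξ, 0 ≤ φ x ξ) ∧ (∀ ξ, φ x ξ = 0 ↔ ξ = 0) ∧
  (∀ (c : ℝ) (ξ), φ x (c • ξ) = |c| * φ x ξ) ∧
  (∀ ξ η, φ x (ξ + η) ≤ φ x ξ + φ x η)

/-- The dual norm `φ⁰(x,ξ) = sup {ξ·p : φ(x,p) ≤ 1}`. -/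
def dualNorm {n : ℕ} (φ : Euc n → Euc n → ℝ) (x ξ : Euc n) : ℝ :=
  sSup {r | ∃ p : Euc n, φ x p ≤ 1 ∧ r = ⟪ξ, p⟫}

/-! At each point of `ω` some unit vector `P` satisfies `φ(x,P) < V(x)·P`, and the set of such
`P` is open in the unit sphere. The sphere is separable, so countably many directions already
cover `ω`, and for one of them `{x ∈ ω | φ(x,P) < V(x)·P}` has positive measure. This set is
measurable because `φ(·,P)` is continuous on `ω`, and its intersection with a large enough ball
around one of its points is the required `Q`. -/

theorem IsNormAt.map_zero {n : ℕ} {φ : Euc n → Euc n → ℝ} {x : Euc n} (h : IsNormAt φ x) :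
    φ x 0 = 0 :=
  (h.2.1 0).mpr rfl

theorem IsNormAt.exists_norm_eq_one_lt_inner {n : ℕ} {φ : Euc n → Euc n → ℝ} {x ξ : Euc n}
    (h : IsNormAt φ x) (hξ : 1 < dualNorm φ x ξ) : ∃ P : Euc n, ‖P‖ = 1 ∧ φ x P < ⟪ξ, P⟫ := by
  have hne : {r | ∃ p : Euc n, φ x p ≤ 1 ∧ r = ⟪ξ, p⟫}.Nonempty :=
    ⟨_, 0, h.map_zero.le.trans zero_le_one, rfl⟩
  obtain ⟨_, ⟨p, hp1, rfl⟩, hlt⟩ := exists_lt_of_lt_csSup hne hξ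
  have hp : p ≠ 0 := by rintro rfl; rw [inner_zero_right] at hlt; linarith
  have hp0 : 0 < ‖p‖ := norm_pos_iff.mpr hp
  refine ⟨‖p‖⁻¹ • p, norm_smul_inv_norm hp, ?_⟩
  rw [h.2.2.1, real_inner_smul_right, abs_of_pos (inv_pos.mpr hp0)]
  exact mul_lt_mul_of_pos_left (hp1.trans_lt hlt) (inv_pos.mpr hp0)

theorem exists_measure_setOf_pos_of_isOpen {X E : Type*} [MeasurableSpace X] [TopologicalSpace E]
    [TopologicalSpace.SeparableSpace E] {μ : Measure X} {ω : Set X} (hω : μ ω ≠ 0)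
    {p : X → E → Prop} (hopen : ∀ x ∈ ω, IsOpen {d | p x d}) (hex : ∀ x ∈ ω, ∃ d, p x d) :
    ∃ d, 0 < μ {x ∈ ω | p x d} := by
  obtain ⟨D, hDc, hDd⟩ := TopologicalSpace.exists_countable_dense E
  have : Countable D := hDc.to_subtype
  have hcover : ω ⊆ ⋃ d : D, {x ∈ ω | p x d} := by
    intro x hx
    obtain ⟨d, hdD, hd⟩ := hDd.exists_mem_open (hopen x hx) (hex x hx)
    exact Set.mem_iUnion.mpr ⟨⟨d, hdD⟩, hx, hd⟩
  obtain ⟨d, hd⟩ := exists_measure_pos_of_not_measure_iUnion_null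
    (measure_pos_of_superset hcover hω).ne'
  exact ⟨d, hd⟩

theorem Metric.exists_measure_ball_inter_pos {X : Type*} [PseudoMetricSpace X] [MeasurableSpace X]
    {μ : Measure X} {A : Set X} (hA : μ A ≠ 0) (z : X) : ∃ ε > (0 : ℝ), 0 < μ (ball z ε ∩ A) := by
  have hcover : A ⊆ ⋃ k : ℕ, ball z (k + 1) ∩ A := fun x hx => by
    obtain ⟨k, hk⟩ := exists_nat_gt (dist x z)
    exact Set.mem_iUnion.mpr ⟨k, mem_ball.mpr (hk.trans (lt_add_one _)), hx⟩
  obtain ⟨k, hk⟩ := exists_measure_pos_of_not_measure_iUnion_null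
    (measure_pos_of_superset hcover hA).ne'
  exact ⟨k + 1, by positivity, hk⟩

theorem MeasurableSet.setOf_lt_of_continuousOn {X : Type*} [TopologicalSpace X]
    [MeasurableSpace X] [OpensMeasurableSpace X] {s : Set X} {f g : X → ℝ}
    (hs : MeasurableSet s) (hf : ContinuousOn f s) (hg : Measurable g) :
    MeasurableSet {x ∈ s | f x < g x} := by
  classical
  have hm : Measurable (s.piecewise f 0) := hf.measurable_piecewise continuousOn_const hs
  convert hs.inter (measurableSet_lt hm hg) using 1
  ext x
  simp +contextual [Set.piecewise]

theorem stmt3_general {n : ℕ} (Ω : Set (Euc n))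
    (φ : Euc n → Euc n → ℝ)
    (hφc : ContinuousOn (fun q : Euc n × Euc n => φ q.1 q.2) (Ω ×ˢ Set.univ))
    (hnorm : ∀ x ∈ Ω, IsNormAt φ x)
    (V : Euc n → Euc n) (hVm : Measurable V)
    (ω : Set (Euc n)) (hωm : MeasurableSet ω) (hωΩ : ω ⊆ Ω) (hωpos : 0 < volume ω)
    (hbig : ∀ x ∈ ω, 1 < dualNorm φ x (V x)) :
    ∃ z ∈ ω, ∃ P : Euc n, ‖P‖ = 1 ∧ ∃ ε > (0:ℝ), ∃ Q ⊆ Metric.ball z ε ∩ ω,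
      MeasurableSet Q ∧ 0 < volume Q ∧ ∀ y ∈ Q, φ y P < ⟪V y, P⟫ := by
  have hφx : ∀ x ∈ Ω, Continuous (φ x) := fun x hx =>
    continuousOn_univ.mp <| hφc.comp (Continuous.prodMk_right x).continuousOn
      fun ξ _ => ⟨hx, trivial⟩
  obtain ⟨⟨P, hP⟩, hSpos⟩ := exists_measure_setOf_pos_of_isOpen (E := Metric.sphere (0 : Euc n) 1)
    hωpos.ne' (p := fun x P => φ x P < ⟪V x, P⟫)
    (fun x hx => isOpen_lt ((hφx x (hωΩ hx)).comp continuous_subtype_val)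
      (continuous_const.inner continuous_subtype_val))
    (fun x hx => by
      obtain ⟨P, hP, hlt⟩ := (hnorm x (hωΩ hx)).exists_norm_eq_one_lt_inner (hbig x hx)
      exact ⟨⟨P, mem_sphere_zero_iff_norm.mpr hP⟩, hlt⟩)
  set S := {x ∈ ω | φ x P < ⟪V x, P⟫}
  have hSm : MeasurableSet S := hωm.setOf_lt_of_continuousOn
    (hφc.comp (continuous_id.prodMk continuous_const).continuousOn fun x hx => ⟨hωΩ hx, trivial⟩)
    (hVm.inner measurable_const)
  obtain ⟨z, hzω, -⟩ := nonempty_of_measure_ne_zero hSpos.ne'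
  obtain ⟨ε, hε, hQpos⟩ := Metric.exists_measure_ball_inter_pos hSpos.ne' z
  exact ⟨z, hzω, P, mem_sphere_zero_iff_norm.mp hP, ε, hε, Metric.ball z ε ∩ S,
    Set.inter_subset_inter_right _ fun x hx => hx.1, measurableSet_ball.inter hSm, hQpos,
    fun y hy => hy.2.2⟩

/-- If `φ⁰(x,V(x)) > 1` on a set `ω` of positive measure, there are a point `z ∈ ω`,
a unit vector `P`, `ε > 0` and a positive-measure set `Q ⊆ B(z,ε) ∩ ω` on which
`φ(y,P) < V(y)·P`. -/
theorem stmt3 {n : ℕ} (Ω : Set (Euc n)) (hΩo : IsOpen Ω) (hΩb : Bornology.IsBounded Ω)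
    (φ : Euc n → Euc n → ℝ)
    (hφc : ContinuousOn (fun q : Euc n × Euc n => φ q.1 q.2) (Ω ×ˢ Set.univ))
    (hnorm : ∀ x ∈ Ω, IsNormAt φ x)
    (V : Euc n → Euc n) (hVm : Measurable V) (C : ℝ) (hVb : ∀ x, ‖V x‖ ≤ C)
    (ω : Set (Euc n)) (hωm : MeasurableSet ω) (hωΩ : ω ⊆ Ω) (hωpos : 0 < volume ω)
    (hbig : ∀ x ∈ ω, 1 < dualNorm φ x (V x)) :
    ∃ z ∈ ω, ∃ P : Euc n, ‖P‖ = 1 ∧ ∃ ε > (0:ℝ), ∃ Q ⊆ Metric.ball z ε ∩ ω,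
      MeasurableSet Q ∧ 0 < volume Q ∧ ∀ y ∈ Q, φ y P < ⟪V y, P⟫ :=
  stmt3_general Ω φ hφc hnorm V hVm ω hωm hωΩ hωpos hbig
end
end

section
/- Let E(P) := ∫_Ω φ(x, P(x) + ∇f(x)) dx on (L¹(Ω))ⁿ. If V ∈ (L^∞(Ω))ⁿ satisfies φ⁰(x,V(x)) ≤ 1 a.e. in Ω, then the Legendre–Fenchel conjugate satisfies E*(V) = −⟨∇f, V⟩ = −∫_Ω ∇f · V dx. -/
open MeasureTheory
open scoped RealInnerProductSpace ENNReal Topology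

noncomputable section

lemma normLower {n : ℕ} (φn : Euc n → ℝ) (hc : Continuous φn)
    (h0 : ∀ ξ, 0 ≤ φn ξ) (hz : ∀ ξ, φn ξ = 0 ↔ ξ = 0)
    (hs : ∀ (c : ℝ) (ξ), φn (c • ξ) = |c| * φn ξ) :
    ∃ m > 0, ∀ p, m * ‖p‖ ≤ φn p := by
  by_cases hn : ∃ p : Euc n, p ≠ 0
  · obtain ⟨p0, hp0⟩ := hn
    have hsph : IsCompact (Metric.sphere (0 : Euc n) 1) := isCompact_sphere 0 1
    have hne : (Metric.sphere (0 : Euc n) 1).Nonempty := by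
      refine ⟨‖p0‖⁻¹ • p0, ?_⟩
      have : ‖p0‖ ≠ 0 := norm_ne_zero_iff.mpr hp0
      simp [norm_smul, abs_of_nonneg (inv_nonneg.mpr (norm_nonneg p0)),
        inv_mul_cancel₀ this]
    obtain ⟨q, hq, hmin⟩ := hsph.exists_isMinOn hne hc.continuousOn
    have hq0 : q ≠ 0 := by
      intro h; rw [h] at hq; simp at hq
    refine ⟨φn q, lt_of_le_of_ne (h0 q) (fun h => hq0 ((hz q).1 h.symm)), ?_⟩
    intro p
    rcases eq_or_ne p 0 with rfl | hp
    · simp [(hz 0).2 rfl]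
    · have hnp : (0:ℝ) < ‖p‖ := norm_pos_iff.mpr hp
      have hmem : ‖p‖⁻¹ • p ∈ Metric.sphere (0:Euc n) 1 := by
        simp [norm_smul, abs_of_pos (inv_pos.mpr hnp), inv_mul_cancel₀ hnp.ne']
      have h1 := isMinOn_iff.mp hmin _ hmem
      rw [hs, abs_of_pos (inv_pos.mpr hnp)] at h1
      have := mul_le_mul_of_nonneg_right h1 hnp.le
      calc φn q * ‖p‖ ≤ (‖p‖⁻¹ * φn p) * ‖p‖ := this
        _ = φn p := by field_simp
  · push_neg at hn
    refine ⟨1, one_pos, fun p => ?_⟩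
    simp [hn p, (hz 0).2 rfl]

lemma pointwiseIneq {n : ℕ} (φ : Euc n → Euc n → ℝ) (x : Euc n)
    (hc : Continuous (φ x)) (hN : IsNormAt φ x) (v : Euc n)
    (hd : dualNorm φ x v ≤ 1) : ∀ ξ, ⟪v, ξ⟫ ≤ φ x ξ := by
  obtain ⟨h0, hz, hs, _⟩ := hN
  obtain ⟨m, hm, hlow⟩ := normLower (φ x) hc h0 hz hs
  have hBdd : BddAbove {r | ∃ p : Euc n, φ x p ≤ 1 ∧ r = ⟪v, p⟫} := by
    refine ⟨‖v‖ * m⁻¹, fun r hr => ?_⟩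
    obtain ⟨p, hp1, rfl⟩ := hr
    have hpn : ‖p‖ ≤ m⁻¹ := by
      have h1 : m * ‖p‖ ≤ 1 := le_trans (hlow p) hp1
      nlinarith [mul_inv_cancel₀ hm.ne', norm_nonneg p]
    calc ⟪v, p⟫ ≤ ‖v‖ * ‖p‖ := real_inner_le_norm v p
      _ ≤ ‖v‖ * m⁻¹ := mul_le_mul_of_nonneg_left hpn (norm_nonneg v)
  intro ξ
  rcases eq_or_ne ξ 0 with rfl | hξ
  · simp [(hz 0).2 rfl]
  · have ht : 0 < φ x ξ := lt_of_le_of_ne (h0 ξ) (fun h => hξ ((hz ξ).1 h.symm))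
    set p := (φ x ξ)⁻¹ • ξ with hpdef
    have hφp : φ x p = 1 := by
      rw [hpdef, hs, abs_of_pos (inv_pos.mpr ht), inv_mul_cancel₀ ht.ne']
    have hmem : ⟪v, p⟫ ∈ {r | ∃ p : Euc n, φ x p ≤ 1 ∧ r = ⟪v, p⟫} :=
      ⟨p, hφp.le, rfl⟩
    have h1 : ⟪v, p⟫ ≤ 1 := le_trans (le_csSup hBdd hmem) hd
    have h2 : ⟪v, p⟫ = (φ x ξ)⁻¹ * ⟪v, ξ⟫ := by
      rw [hpdef, real_inner_smul_right]
    rw [h2] at h1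
    have := mul_le_mul_of_nonneg_left h1 ht.le
    calc ⟪v, ξ⟫ = φ x ξ * ((φ x ξ)⁻¹ * ⟪v, ξ⟫) := by field_simp
      _ ≤ φ x ξ * 1 := this
      _ = φ x ξ := mul_one _

/-- If `φ⁰(x,V(x)) ≤ 1` a.e. in `Ω`, then the Legendre–Fenchel conjugate of
`E(P) = ∫_Ω φ(x, P + ∇f) dx` satisfies `E*(V) = -⟨∇f, V⟩`; in particular the
supremum defining `E*(V)` is attained, i.e. `-∫_Ω ∇f·V` is the greatest element
of the set of values `⟨V,P⟩ - E(P)`. -/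
theorem stmt4 {n : ℕ} (Ω : Set (Euc n)) (hΩo : IsOpen Ω) (hΩb : Bornology.IsBounded Ω)
    (φ : Euc n → Euc n → ℝ) (α : ℝ) (hα : 0 < α)
    (hφc : ContinuousOn (fun q : Euc n × Euc n => φ q.1 q.2) (Ω ×ˢ Set.univ))
    (hnorm : ∀ x ∈ Ω, IsNormAt φ x)
    (hbound : ∀ x ∈ Ω, ∀ ξ, φ x ξ ≤ α * ‖ξ‖)
    (f : Euc n → ℝ) (gradf : Euc n → Euc n)
    (hf : ∀ x, HasGradientAt f (gradf x) x) (hsupp : HasCompactSupport f)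
    (hfint : Integrable gradf (volume.restrict Ω))
    (V : Euc n → Euc n) (C : ℝ) (hVb : ∀ x, ‖V x‖ ≤ C)
    (hVm : AEStronglyMeasurable V (volume.restrict Ω))
    (hdual : ∀ᵐ x ∂(volume.restrict Ω), dualNorm φ x (V x) ≤ 1) :
    IsGreatest
      {r : ℝ | ∃ P : Euc n → Euc n, Integrable P (volume.restrict Ω) ∧
        Integrable (fun x => φ x (P x + gradf x)) (volume.restrict Ω) ∧
        r = (∫ x in Ω, ⟪V x, P x⟫) - ∫ x in Ω, φ x (P x + gradf x)}
      (-∫ x in Ω, ⟪gradf x, V x⟫) := by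
  have hΩm : MeasurableSet Ω := hΩo.measurableSet
  have haeΩ : ∀ᵐ x ∂(volume.restrict Ω), x ∈ Ω := ae_restrict_mem hΩm
  have hC0 : 0 ≤ C := le_trans (norm_nonneg (V 0)) (hVb 0)
  -- continuity in the second variable
  have hcx : ∀ x ∈ Ω, Continuous (φ x) := by
    intro x hx
    rw [continuous_iff_continuousAt]
    intro ξ
    have hopen : IsOpen (Ω ×ˢ (Set.univ : Set (Euc n))) := hΩo.prod isOpen_univ
    have h1 := hφc.continuousAt (hopen.mem_nhds
      (show (x, ξ) ∈ Ω ×ˢ (Set.univ : Set (Euc n)) from ⟨hx, trivial⟩))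
    exact h1.comp ((continuous_const.prodMk continuous_id).continuousAt)
  -- integrability of inner products against V
  have hinner : ∀ Q : Euc n → Euc n, Integrable Q (volume.restrict Ω) →
      Integrable (fun x => ⟪V x, Q x⟫) (volume.restrict Ω) := by
    intro Q hQ
    refine Integrable.mono' (hQ.norm.const_mul C) (hVm.inner hQ.aestronglyMeasurable) ?_
    filter_upwards with x
    calc ‖⟪V x, Q x⟫‖ ≤ ‖V x‖ * ‖Q x‖ := norm_inner_le_norm _ _
      _ ≤ C * ‖Q x‖ := mul_le_mul_of_nonneg_right (hVb x) (norm_nonneg _)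
  constructor
  · -- membership: take P = -gradf
    have hzero : (fun x => φ x (-gradf x + gradf x)) =ᵐ[volume.restrict Ω] 0 := by
      filter_upwards [haeΩ] with x hx
      simp [((hnorm x hx).2.1 0).2 rfl]
    refine ⟨fun x => -gradf x, hfint.neg, (integrable_zero _ _ _).congr hzero.symm, ?_⟩
    have h1 : (∫ x in Ω, φ x (-gradf x + gradf x)) = 0 := by
      rw [integral_congr_ae hzero]; simp
    have h2 : (∫ x in Ω, ⟪V x, -gradf x⟫) = -∫ x in Ω, ⟪gradf x, V x⟫ := by
      rw [← integral_neg]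
      congr 1; ext x; rw [inner_neg_right, real_inner_comm]
    rw [h1, h2, sub_zero]
  · rintro r ⟨P, hPint, hφint, rfl⟩
    have hQint : Integrable (fun x => P x + gradf x) (volume.restrict Ω) := hPint.add hfint
    have key : (∫ x in Ω, ⟪V x, P x + gradf x⟫) ≤ ∫ x in Ω, φ x (P x + gradf x) := by
      refine integral_mono_ae (hinner _ hQint) hφint ?_
      filter_upwards [haeΩ, hdual] with x hx hd
      exact pointwiseIneq φ x (hcx x hx) (hnorm x hx) (V x) hd _
    have hsplit : (∫ x in Ω, ⟪V x, P x + gradf x⟫)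
        = (∫ x in Ω, ⟪V x, P x⟫) + ∫ x in Ω, ⟪V x, gradf x⟫ := by
      rw [← integral_add (hinner _ hPint) (hinner _ hfint)]
      congr 1
      ext x
      rw [inner_add_right]
    have hcomm : (∫ x in Ω, ⟪gradf x, V x⟫) = ∫ x in Ω, ⟪V x, gradf x⟫ := by
      congr 1; ext x; rw [real_inner_comm]
    rw [hcomm]
    linarith [key, hsplit.symm.le]
end
end

section
/- Let E(P) := ∫_Ω φ(x, P(x) + ∇f(x)) dx on (L¹(Ω))ⁿ. If V ∈ (L^∞(Ω))ⁿ satisfies φ⁰(x,V(x)) > 1 on a set of positive Lebesgue measure in Ω, then E*(V) = +∞. -/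
/-!
At each point of `ω` the hypothesis `φ⁰(x, V(x)) > 1` yields a direction `p` with
`⟪V(x), p⟫ - φ(x, p) > 0`. This gap is continuous in `p`, so testing it on a countable dense set
of directions and a sequence of margins produces one direction `q` and one margin `c > 0` that
work on a set `T ⊆ ω` of positive measure. For `P = t q 𝟙_T`, the triangle inequality and
homogeneity of `φ(x, ·)` give `⟨V, P⟩ - E(P) ≥ t c |T| - ∫_Ω φ(x, ∇f)`, which is unbounded
as `t → ∞`.
-/
open MeasureTheory
open scoped RealInnerProductSpace ENNReal Topology

noncomputable section

open Set

theorem exists_le_one_lt_inner_of_lt_dualNorm {n : ℕ} {φ : Euc n → Euc n → ℝ} {x ξ : Euc n}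
    {r : ℝ} (hr : 0 ≤ r) (h : r < dualNorm φ x ξ) : ∃ p, φ x p ≤ 1 ∧ r < ⟪ξ, p⟫ := by
  have hne : {r | ∃ p : Euc n, φ x p ≤ 1 ∧ r = ⟪ξ, p⟫}.Nonempty := by
    by_contra hemp
    rw [not_nonempty_iff_eq_empty] at hemp
    rw [dualNorm, hemp, Real.sSup_empty] at h
    linarith
  obtain ⟨_, ⟨p, hp, rfl⟩, hrp⟩ := exists_lt_of_lt_csSup hne h
  exact ⟨p, hp, hrp⟩

/-- A countable dense set of test points and the thresholds `1 / (k + 1)` cover `ω` by countably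
many sets, so one of them has positive measure. -/
theorem exists_measure_inter_setOf_lt_ne_zero {X E : Type*} [MeasurableSpace X]
    [TopologicalSpace E] [TopologicalSpace.SeparableSpace E] {μ : Measure X} {ω : Set X}
    {G : X → E → ℝ} (hG : ∀ x ∈ ω, Continuous (G x)) (hpos : ∀ x ∈ ω, ∃ p, 0 < G x p)
    (hω : μ ω ≠ 0) : ∃ q, ∃ c > 0, μ (ω ∩ {x | c < G x q}) ≠ 0 := by
  by_contra! hnull
  obtain ⟨S, hSc, hSd⟩ := TopologicalSpace.exists_countable_dense E
  have hcover : ω ⊆ ⋃ q ∈ S, ⋃ k : ℕ, ω ∩ {x | 1 / ((k : ℝ) + 1) < G x q} := by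
    intro x hx
    obtain ⟨p, hp⟩ := hpos x hx
    obtain ⟨q, hq, hqS⟩ :=
      hSd.inter_open_nonempty _ (isOpen_lt continuous_const (hG x hx)) ⟨p, hp⟩
    obtain ⟨k, hk⟩ := exists_nat_one_div_lt (show 0 < G x q from hq)
    exact mem_biUnion hqS (mem_iUnion.2 ⟨k, hx, hk⟩)
  refine hω (measure_mono_null hcover ?_)
  rw [measure_biUnion_null_iff hSc]
  exact fun q _ => measure_iUnion_null fun k => hnull q _ Nat.one_div_pos_of_nat

theorem ContinuousOn.measurableSet_inter_setOf_lt_sub {X : Type*} [MeasurableSpace X]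
    [TopologicalSpace X] [OpensMeasurableSpace X] {s : Set X} {f g : X → ℝ}
    (hf : ContinuousOn f s) (hs : MeasurableSet s) (hg : Measurable g) (c : ℝ) :
    MeasurableSet (s ∩ {x | c < g x - f x}) := by
  classical
  have hmeas : Measurable (s.piecewise f 0) := hf.measurable_piecewise continuousOn_const hs
  convert hs.inter (measurableSet_lt (measurable_const (a := c)) (hg.sub hmeas)) using 1
  ext x
  simp +contextual

section Integrand

variable {X E : Type*} [MeasurableSpace X] [TopologicalSpace X] [OpensMeasurableSpace X]
  [NormedAddCommGroup E] [MeasurableSpace E] [BorelSpace E] [SecondCountableTopology E]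
  {μ : Measure X} {s : Set X} {φ : X → E → ℝ} {F : X → E}

theorem ContinuousOn.aestronglyMeasurable_comp_prodMk
    (hφ : ContinuousOn (fun z : X × E => φ z.1 z.2) (s ×ˢ univ)) (hs : MeasurableSet s)
    (hF : AEMeasurable F (μ.restrict s)) :
    AEStronglyMeasurable (fun x => φ x (F x)) (μ.restrict s) := by
  have hgraph : AEMeasurable (fun x => (x, F x)) (μ.restrict s) := aemeasurable_id.prodMk hF
  set ν := (μ.restrict s).map fun x => (x, F x)
  have hν : ν.restrict (s ×ˢ univ) = ν := by
    refine Measure.restrict_eq_self_of_ae_mem ((ae_map_iff hgraph (hs.prod .univ)).2 ?_)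
    filter_upwards [ae_restrict_mem hs] with x hx using ⟨hx, trivial⟩
  have hφν : AEStronglyMeasurable (fun z : X × E => φ z.1 z.2) ν := by
    simpa only [hν] using hφ.aestronglyMeasurable (μ := ν) (hs.prod .univ)
  exact hφν.comp_aemeasurable hgraph

theorem integrable_comp_of_le_mul_norm
    (hφ : ContinuousOn (fun z : X × E => φ z.1 z.2) (s ×ˢ univ)) (hs : MeasurableSet s)
    {α : ℝ} (h0 : ∀ x ∈ s, ∀ ξ, 0 ≤ φ x ξ) (hle : ∀ x ∈ s, ∀ ξ, φ x ξ ≤ α * ‖ξ‖)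
    (hF : Integrable F (μ.restrict s)) : Integrable (fun x => φ x (F x)) (μ.restrict s) := by
  refine (hF.norm.const_mul α).mono' (hφ.aestronglyMeasurable_comp_prodMk hs hF.aemeasurable) ?_
  filter_upwards [ae_restrict_mem hs] with x hx
  rw [Real.norm_of_nonneg (h0 x hx _)]
  exact hle x hx _

end Integrand

theorem MeasureTheory.Integrable.inner_of_norm_le {X E : Type*} [MeasurableSpace X]
    {μ : Measure X} [NormedAddCommGroup E] [InnerProductSpace ℝ E] {V P : X → E} {C : ℝ}
    (hV : AEStronglyMeasurable V μ) (hVC : ∀ᵐ x ∂μ, ‖V x‖ ≤ C) (hP : Integrable P μ) :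
    Integrable (fun x => ⟪V x, P x⟫) μ := by
  refine (hP.norm.const_mul C).mono' (hV.inner hP.aestronglyMeasurable) ?_
  filter_upwards [hVC] with x hx
  exact (norm_inner_le_norm _ _).trans (mul_le_mul_of_nonneg_right hx (norm_nonneg _))

theorem IsNormAt.indicator_sub_le_inner_sub {n : ℕ} {φ : Euc n → Euc n → ℝ} {x : Euc n}
    (hx : IsNormAt φ x) {T : Set (Euc n)} {v q ξ : Euc n} {t c : ℝ} (ht : 0 ≤ t)
    (hc : x ∈ T → c ≤ ⟪v, q⟫ - φ x q) :
    T.indicator (fun _ => t * c) x - φ x ξ ≤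
      ⟪v, T.indicator (fun _ => t • q) x⟫ - φ x (T.indicator (fun _ => t • q) x + ξ) := by
  obtain ⟨-, -, hsmul, htri⟩ := hx
  by_cases hxT : x ∈ T
  · simp only [indicator_of_mem hxT, real_inner_smul_right]
    have hφ : φ x (t • q + ξ) ≤ t * φ x q + φ x ξ := by
      simpa only [hsmul, abs_of_nonneg ht] using htri (t • q) ξ
    nlinarith [mul_le_mul_of_nonneg_left (hc hxT) ht]
  · simp [indicator_of_notMem hxT]

theorem mul_measureReal_sub_integral_le_integral_inner_sub {n : ℕ} {μ : Measure (Euc n)}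
    {φ : Euc n → Euc n → ℝ} {V G : Euc n → Euc n} {T : Set (Euc n)} {q : Euc n} {t c : ℝ}
    (hnorm : ∀ᵐ x ∂μ, IsNormAt φ x) (hT : MeasurableSet T) (hTfin : μ T ≠ ∞) (ht : 0 ≤ t)
    (hc : ∀ x ∈ T, c ≤ ⟪V x, q⟫ - φ x q)
    (hVP : Integrable (fun x => ⟪V x, T.indicator (fun _ => t • q) x⟫) μ)
    (hφG : Integrable (fun x => φ x (G x)) μ)
    (hφPG : Integrable (fun x => φ x (T.indicator (fun _ => t • q) x + G x)) μ) :
    t * c * μ.real T - ∫ x, φ x (G x) ∂μ ≤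
      (∫ x, ⟪V x, T.indicator (fun _ => t • q) x⟫ ∂μ) -
        ∫ x, φ x (T.indicator (fun _ => t • q) x + G x) ∂μ := by
  have hind : Integrable (T.indicator fun _ => t * c) μ :=
    (integrable_indicator_iff hT).2 (integrableOn_const hTfin)
  calc t * c * μ.real T - ∫ x, φ x (G x) ∂μ
      = ∫ x, (T.indicator (fun _ => t * c) x - φ x (G x)) ∂μ := by
        rw [integral_sub hind hφG, integral_indicator_const _ hT, smul_eq_mul, mul_comm]
    _ ≤ ∫ x, (⟪V x, T.indicator (fun _ => t • q) x⟫ -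
          φ x (T.indicator (fun _ => t • q) x + G x)) ∂μ := by
        refine integral_mono_ae (hind.sub hφG) (hVP.sub hφPG) ?_
        filter_upwards [hnorm] with x hx
        exact hx.indicator_sub_le_inner_sub ht (hc x)
    _ = _ := integral_sub hVP hφPG

theorem stmt5_general {n : ℕ} (Ω : Set (Euc n)) (hΩo : IsOpen Ω) (hΩb : Bornology.IsBounded Ω)
    (φ : Euc n → Euc n → ℝ) (α : ℝ)
    (hφc : ContinuousOn (fun q : Euc n × Euc n => φ q.1 q.2) (Ω ×ˢ Set.univ))
    (hnorm : ∀ x ∈ Ω, IsNormAt φ x)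
    (hbound : ∀ x ∈ Ω, ∀ ξ, φ x ξ ≤ α * ‖ξ‖)
    (gradf : Euc n → Euc n)
    (hfint : Integrable gradf (volume.restrict Ω))
    (V : Euc n → Euc n) (hVm : Measurable V) (C : ℝ) (hVb : ∀ x, ‖V x‖ ≤ C)
    (ω : Set (Euc n)) (hωm : MeasurableSet ω) (hωΩ : ω ⊆ Ω) (hωpos : 0 < volume ω)
    (hbig : ∀ x ∈ ω, 1 < dualNorm φ x (V x)) :
    ∀ M : ℝ, ∃ P : Euc n → Euc n, Integrable P (volume.restrict Ω) ∧
      Integrable (fun x => φ x (P x + gradf x)) (volume.restrict Ω) ∧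
      M < (∫ x in Ω, ⟪V x, P x⟫) - ∫ x in Ω, φ x (P x + gradf x) := by
  intro M
  set μ := volume.restrict Ω
  have hΩm := hΩo.measurableSet
  have hgap : ∀ x ∈ ω, ∃ p, 0 < ⟪V x, p⟫ - φ x p := fun x hx => by
    obtain ⟨p, hp, hVp⟩ := exists_le_one_lt_inner_of_lt_dualNorm zero_le_one (hbig x hx)
    exact ⟨p, by linarith⟩
  have hcont : ∀ x ∈ ω, Continuous fun p => ⟪V x, p⟫ - φ x p := fun x hx =>
    continuous_const.inner continuous_id |>.sub <|
      hφc.comp_continuous (.prodMk_right x) fun _ => ⟨hωΩ hx, trivial⟩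
  obtain ⟨q, c, hc, hTpos⟩ := exists_measure_inter_setOf_lt_ne_zero hcont hgap hωpos.ne'
  set T := ω ∩ {x | c < ⟪V x, q⟫ - φ x q}
  have hTΩ : T ⊆ Ω := inter_subset_left.trans hωΩ
  have hT : MeasurableSet T := by
    have hφq : ContinuousOn (fun x => φ x q) Ω :=
      hφc.comp (continuous_id.prodMk continuous_const).continuousOn fun x hx => ⟨hx, trivial⟩
    simpa only [← inter_assoc, inter_eq_left.2 hωΩ] using hωm.inter <|
      hφq.measurableSet_inter_setOf_lt_sub hΩm (hVm.inner (measurable_const (a := q))) c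
  have hμT : μ T = volume T := Measure.restrict_eq_self _ hTΩ
  have hTfin : μ T ≠ ∞ := hμT ▸ ((measure_mono hTΩ).trans_lt hΩb.measure_lt_top).ne
  have hTreal : 0 < μ.real T := ENNReal.toReal_pos (hμT ▸ hTpos) hTfin
  obtain ⟨t, ht⟩ := exists_nat_gt ((M + ∫ x, φ x (gradf x) ∂μ) / (c * μ.real T))
  rw [div_lt_iff₀ (by positivity), ← mul_assoc] at ht
  have hP : Integrable (T.indicator fun _ => (t : ℝ) • q) μ :=
    (integrable_indicator_iff hT).2 (integrableOn_const hTfin)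
  have hφint : ∀ F, Integrable F μ → Integrable (fun x => φ x (F x)) μ := fun F hF =>
    integrable_comp_of_le_mul_norm hφc hΩm (fun x hx => (hnorm x hx).1) hbound hF
  refine ⟨_, hP, hφint _ (hP.add hfint), (lt_sub_iff_add_lt.2 ht).trans_le ?_⟩
  exact mul_measureReal_sub_integral_le_integral_inner_sub
    ((ae_restrict_iff' hΩm).2 (.of_forall hnorm)) hT hTfin t.cast_nonneg (fun x hx => hx.2.le)
    (hP.inner_of_norm_le hVm.aestronglyMeasurable (.of_forall hVb)) (hφint _ hfint)
    (hφint _ (hP.add hfint))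

/-- If `φ⁰(x,V(x)) > 1` on a set of positive measure in `Ω`, then `E*(V) = +∞`,
i.e. the values `⟨V,P⟩ - E(P)` are unbounded above. -/
theorem stmt5 {n : ℕ} (Ω : Set (Euc n)) (hΩo : IsOpen Ω) (hΩb : Bornology.IsBounded Ω)
    (φ : Euc n → Euc n → ℝ) (α : ℝ) (hα : 0 < α)
    (hφc : ContinuousOn (fun q : Euc n × Euc n => φ q.1 q.2) (Ω ×ˢ Set.univ))
    (hnorm : ∀ x ∈ Ω, IsNormAt φ x)
    (hbound : ∀ x ∈ Ω, ∀ ξ, φ x ξ ≤ α * ‖ξ‖)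
    (f : Euc n → ℝ) (gradf : Euc n → Euc n)
    (hf : ∀ x, HasGradientAt f (gradf x) x) (hsupp : HasCompactSupport f)
    (hfint : Integrable gradf (volume.restrict Ω))
    (V : Euc n → Euc n) (hVm : Measurable V) (C : ℝ) (hVb : ∀ x, ‖V x‖ ≤ C)
    (ω : Set (Euc n)) (hωm : MeasurableSet ω) (hωΩ : ω ⊆ Ω) (hωpos : 0 < volume ω)
    (hbig : ∀ x ∈ ω, 1 < dualNorm φ x (V x)) :
    ∀ M : ℝ, ∃ P : Euc n → Euc n, Integrable P (volume.restrict Ω) ∧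
      Integrable (fun x => φ x (P x + gradf x)) (volume.restrict Ω) ∧
      M < (∫ x in Ω, ⟪V x, P x⟫) - ∫ x in Ω, φ x (P x + gradf x) :=
  stmt5_general Ω hΩo hΩb φ α hφc hnorm hbound gradf hfint V hVm C hVb ω hωm hωΩ hωpos hbig
end
end

section
/- Suppose u ∈ BV(Ω) and T ∈ (L^∞(Ω))ⁿ is divergence free with φ⁰(x,T(x)) ≤ 1 a.e. in Ω, and suppose equality ∫_Ω φ(x,Du) = ∫_{∂Ω} u [T,ν_Ω] dℋ^{n−1} holds. Then φ(x, Du/|Du|) = T · (Du/|Du|) holds |Du|-almost everywhere in Ω. -/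
open MeasureTheory
open scoped RealInnerProductSpace ENNReal Topology

noncomputable section

lemma key_le {n : ℕ} (φ : Euc n → Euc n → ℝ) (x : Euc n) (hx : IsNormAt φ x)
    (α : ℝ) (hα : 0 < α) (hb : ∀ ξ, φ x ξ ≤ α * ‖ξ‖)
    (T v : Euc n) (hv : ‖v‖ = 1) (hd : dualNorm φ x T ≤ 1) :
    ⟪T, v⟫ ≤ φ x v := by
  obtain ⟨hpos, hzero, hhom, htri⟩ := hx
  have hsym : ∀ ξ η : Euc n, φ x (ξ - η) = φ x (η - ξ) := by
    intro ξ η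
    have : (η - ξ) = (-1 : ℝ) • (ξ - η) := by module
    rw [this, hhom]; simp
  have lip : ∀ ξ η : Euc n, φ x ξ ≤ φ x η + α * ‖ξ - η‖ := by
    intro ξ η
    have h1 : φ x ξ ≤ φ x η + φ x (ξ - η) := by
      have := htri η (ξ - η); simpa using this
    exact h1.trans (by gcongr; exact hb _)
  have cont : Continuous (φ x) := by
    apply (LipschitzWith.of_dist_le_mul (K := α.toNNReal) (f := φ x) ?_).continuous
    intro ξ η
    rw [Real.dist_eq, Real.coe_toNNReal α hα.le]
    rw [abs_le]
    constructor
    · have h := lip η ξ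
      rw [norm_sub_rev η ξ] at h
      rw [dist_eq_norm]; linarith
    · have := lip ξ η
      rw [dist_eq_norm]; linarith
  have hvsphere : v ∈ Metric.sphere (0 : Euc n) 1 := by
    simpa [mem_sphere_zero_iff_norm] using hv
  obtain ⟨w, hw, hmin⟩ := (isCompact_sphere (0 : Euc n) 1).exists_isMinOn ⟨v, hvsphere⟩
    cont.continuousOn
  have hwn : ‖w‖ = 1 := by simpa [mem_sphere_zero_iff_norm] using hw
  set c := φ x w with hc
  have hc0 : 0 < c := by
    rcases lt_or_eq_of_le (hpos w) with h | h
    · exact h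
    · exfalso
      have : w = 0 := (hzero w).mp h.symm
      rw [this] at hwn; simp at hwn
  have lower : ∀ p : Euc n, c * ‖p‖ ≤ φ x p := by
    intro p
    rcases eq_or_ne p 0 with rfl | hp
    · simp [(hzero 0).mpr rfl]
    · have hpn : (0:ℝ) < ‖p‖ := norm_pos_iff.mpr hp
      have hu : (‖p‖⁻¹ • p) ∈ Metric.sphere (0 : Euc n) 1 := by
        simp [mem_sphere_zero_iff_norm, norm_smul, abs_of_pos (inv_pos.mpr hpn),
          inv_mul_cancel₀ hpn.ne']
      have h1 : c ≤ φ x (‖p‖⁻¹ • p) := hmin hu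
      have h2 : φ x (‖p‖⁻¹ • p) = ‖p‖⁻¹ * φ x p := by
        rw [hhom]; rw [abs_of_pos (inv_pos.mpr hpn)]
      rw [h2] at h1
      calc c * ‖p‖ ≤ (‖p‖⁻¹ * φ x p) * ‖p‖ := by gcongr
        _ = φ x p := by field_simp
  have hbdd : BddAbove {r | ∃ p : Euc n, φ x p ≤ 1 ∧ r = ⟪T, p⟫} := by
    refine ⟨‖T‖ * c⁻¹, ?_⟩
    rintro r ⟨p, hp, rfl⟩
    have h1 : ‖p‖ ≤ c⁻¹ := by
      have h2 : c * ‖p‖ ≤ 1 := (lower p).trans hp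
      calc ‖p‖ = c⁻¹ * (c * ‖p‖) := by field_simp
        _ ≤ c⁻¹ * 1 := mul_le_mul_of_nonneg_left h2 (inv_pos.mpr hc0).le
        _ = c⁻¹ := mul_one _
    calc ⟪T, p⟫ ≤ ‖T‖ * ‖p‖ := real_inner_le_norm T p
      _ ≤ ‖T‖ * c⁻¹ := by gcongr
  set a := φ x v with ha
  have ha0 : 0 < a := by
    rcases lt_or_eq_of_le (hpos v) with h | h
    · exact h
    · exfalso
      have : v = 0 := (hzero v).mp h.symm
      rw [this] at hv; simp at hv
  have hpa : φ x (a⁻¹ • v) ≤ 1 := by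
    rw [hhom, abs_of_pos (inv_pos.mpr ha0)]
    rw [← ha, inv_mul_cancel₀ ha0.ne']
  have hmem : ⟪T, a⁻¹ • v⟫ ∈ {r | ∃ p : Euc n, φ x p ≤ 1 ∧ r = ⟪T, p⟫} :=
    ⟨_, hpa, rfl⟩
  have h1 : ⟪T, a⁻¹ • v⟫ ≤ 1 := (le_csSup hbdd hmem).trans hd
  rw [inner_smul_right] at h1
  calc ⟪T, v⟫ = a * (a⁻¹ * ⟪T, v⟫) := by field_simp
    _ ≤ a * 1 := by gcongr
    _ = a := mul_one a

/-- Equality case: if moreover `∫_Ω φ(x,Du) = ∫_{∂Ω} u [T,ν_Ω] dℋ^{n-1}`, then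
`φ(x, Du/|Du|) = T·(Du/|Du|)` holds `|Du|`-a.e. in `Ω`. -/
theorem stmt8 {n : ℕ} (Ω : Set (Euc n)) (φ : Euc n → Euc n → ℝ) (α : ℝ) (hα : 0 < α)
    (hnorm : ∀ x ∈ Ω, IsNormAt φ x) (hbound : ∀ x ∈ Ω, ∀ ξ, φ x ξ ≤ α * ‖ξ‖)
    (T : Euc n → Euc n) (CT : ℝ) (hTb : ∀ x, ‖T x‖ ≤ CT)
    (hdual : ∀ x ∈ Ω, dualNorm φ x (T x) ≤ 1)
    (DuAbs : Measure (Euc n)) (vu : Euc n → Euc n)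
    (hvu : ∀ᵐ x ∂DuAbs, x ∈ Ω ∧ ‖vu x‖ = 1)
    (σ : Measure (Euc n)) (traceU nT : Euc n → ℝ)
    (hGG : ∫ x, traceU x * nT x ∂σ = ∫ x, ⟪T x, vu x⟫ ∂DuAbs)
    (hint1 : Integrable (fun x => φ x (vu x)) DuAbs)
    (hint2 : Integrable (fun x => ⟪T x, vu x⟫) DuAbs)
    (heq : (∫ x, φ x (vu x) ∂DuAbs) = ∫ x, traceU x * nT x ∂σ) :
    ∀ᵐ x ∂DuAbs, φ x (vu x) = ⟪T x, vu x⟫ := by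
  have hae : ∀ᵐ x ∂DuAbs, ⟪T x, vu x⟫ ≤ φ x (vu x) :=
    hvu.mono fun x hx =>
      key_le φ x (hnorm x hx.1) α hα (hbound x hx.1) (T x) (vu x) hx.2 (hdual x hx.1)
  have hzero : ∫ x, (φ x (vu x) - ⟪T x, vu x⟫) ∂DuAbs = 0 := by
    rw [integral_sub hint1 hint2, heq, hGG, sub_self]
  have hnn : 0 ≤ᵐ[DuAbs] fun x => φ x (vu x) - ⟪T x, vu x⟫ :=
    hae.mono fun x h => sub_nonneg.mpr h
  have h0 := (integral_eq_zero_iff_of_nonneg_ae hnn (hint1.sub hint2)).mp hzero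
  filter_upwards [h0] with x h
  have h' : φ x (vu x) - ⟪T x, vu x⟫ = 0 := h
  linarith
end
end

section
/- Suppose T ∈ (L^∞(Ω))ⁿ is divergence free with φ⁰(x,T) ≤ 1 a.e., w ∈ BV(ℝⁿ) with w = f on Ωᶜ, and ∫_{∂Ω} f [T,ν_Ω] dℋ^{n−1} ≥ ∫_Ω φ(x,Dw) + ∫_{∂Ω} φ(x,ν_Ω)|f − w| dℋ^{n−1}, where ∫_Ω φ(x,Dw) ≥ ∫_{∂Ω} w [T,ν_Ω] dℋ^{n−1}. Then φ(x,ν_Ω) = [T, sign(f−w) ν_Ω] holds ℋ^{n−1}-a.e. on the set {x ∈ ∂Ω : w(x) ≠ f(x)}, i.e., ∫_{∂Ω} φ(x,ν_Ω)|f−w| dℋ^{n−1} = ∫_{∂Ω} (f−w)[T,ν_Ω] dℋ^{n−1} with pointwise equality ℋ^{n−1}-a.e. where f ≠ w. -/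
/-! Since `|[T,ν]| ≤ φ(x,ν)`, the integrand `(f - w)[T,ν]` is dominated pointwise by
`φ(x,ν)|f - w|`, while the chain of inequalities gives the reverse inequality between their
integrals. Integrals of ordered integrable functions agree only if the functions agree a.e.,
and on `{f ≠ w}` one may divide by `|f - w|`. -/

open MeasureTheory
open scoped RealInnerProductSpace ENNReal Topology

noncomputable section

lemma Real.sign_mul_abs (r : ℝ) : Real.sign r * |r| = r := by
  rcases lt_trichotomy r 0 with h | rfl | h
  · rw [Real.sign_of_neg h, abs_of_neg h, neg_one_mul, neg_neg]
  · rw [abs_zero, mul_zero]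
  · rw [Real.sign_of_pos h, abs_of_pos h, one_mul]

lemma mul_le_mul_abs_of_abs_le {a t c : ℝ} (h : |t| ≤ c) : a * t ≤ c * |a| :=
  calc a * t ≤ |a * t| := le_abs_self _
    _ = |a| * |t| := abs_mul a t
    _ ≤ c * |a| := by rw [mul_comm c]; exact mul_le_mul_of_nonneg_left h (abs_nonneg a)

lemma eq_sign_mul_of_mul_abs_eq {a t c : ℝ} (ha : a ≠ 0) (h : c * |a| = a * t) :
    c = Real.sign a * t := by
  refine mul_right_cancel₀ (abs_ne_zero.mpr ha) ?_
  rw [h, mul_assoc, mul_comm t, ← mul_assoc, Real.sign_mul_abs]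

theorem stmt11_general {n : ℕ} (φ : Euc n → Euc n → ℝ)
    (σ : Measure (Euc n)) (ν : Euc n → Euc n)
    (f w : Euc n → ℝ) (nT : Euc n → ℝ) (IΩ : ℝ)  -- IΩ = ∫_Ω φ(x,Dw)
    (hnT : ∀ᵐ x ∂σ, |nT x| ≤ φ x (ν x))
    (hint1 : Integrable (fun x => φ x (ν x) * |f x - w x|) σ)
    (hint2 : Integrable (fun x => w x * nT x) σ)
    (hint3 : Integrable (fun x => f x * nT x) σ)
    (hchain : (∫ x, f x * nT x ∂σ) ≥ IΩ + ∫ x, φ x (ν x) * |f x - w x| ∂σ)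
    (hGG : IΩ ≥ ∫ x, w x * nT x ∂σ) :
    (∫ x, φ x (ν x) * |f x - w x| ∂σ) = (∫ x, (f x - w x) * nT x ∂σ) ∧
    ∀ᵐ x ∂σ, f x ≠ w x → φ x (ν x) = Real.sign (f x - w x) * nT x := by
  have hsplit : (fun x => (f x - w x) * nT x) = fun x => f x * nT x - w x * nT x := by
    funext x; ring
  have hint : Integrable (fun x => (f x - w x) * nT x) σ := hsplit ▸ hint3.sub hint2
  have hle : (fun x => (f x - w x) * nT x) ≤ᵐ[σ] fun x => φ x (ν x) * |f x - w x| :=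
    hnT.mono fun x hx => mul_le_mul_abs_of_abs_le hx
  have hdiff : ∫ x, (f x - w x) * nT x ∂σ = (∫ x, f x * nT x ∂σ) - ∫ x, w x * nT x ∂σ := by
    rw [hsplit, integral_sub hint3 hint2]
  have heq : (∫ x, φ x (ν x) * |f x - w x| ∂σ) = ∫ x, (f x - w x) * nT x ∂σ :=
    le_antisymm (by linarith) (integral_mono_ae hint hint1 hle)
  refine ⟨heq, ?_⟩
  filter_upwards [(integral_eq_iff_of_ae_le hint hint1 hle).mp heq.symm] with x hx hne
  exact eq_sign_mul_of_mul_abs_eq (sub_ne_zero.mpr hne) hx.symm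

/-- Boundary equality: under the duality chain of inequalities, the boundary term is
saturated, i.e. `∫ φ(x,ν)|f-w| dσ = ∫ (f-w)[T,ν] dσ` and `φ(x,ν_Ω) = sign(f-w)[T,ν_Ω]`
holds `ℋ^{n-1}`-a.e. on the jump set `{w ≠ f} ⊆ ∂Ω`.  Here `σ` is the surface measure
on `∂Ω`, `ν` the outer unit normal, `nT = [T,ν_Ω]` the normal trace of the
divergence-free field `T`, `w` the inner trace and `f` the boundary datum. -/
theorem stmt11 {n : ℕ} (Ω : Set (Euc n)) (φ : Euc n → Euc n → ℝ)
    (hnorm : ∀ x ∈ closure Ω, IsNormAt φ x)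
    (σ : Measure (Euc n)) (ν : Euc n → Euc n) (hν : ∀ᵐ x ∂σ, ‖ν x‖ = 1)
    (f w : Euc n → ℝ) (nT : Euc n → ℝ) (IΩ : ℝ)  -- IΩ = ∫_Ω φ(x,Dw)
    (hnT : ∀ᵐ x ∂σ, |nT x| ≤ φ x (ν x))
    (hint1 : Integrable (fun x => φ x (ν x) * |f x - w x|) σ)
    (hint2 : Integrable (fun x => w x * nT x) σ)
    (hint3 : Integrable (fun x => f x * nT x) σ)
    (hchain : (∫ x, f x * nT x ∂σ) ≥ IΩ + ∫ x, φ x (ν x) * |f x - w x| ∂σ)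
    (hGG : IΩ ≥ ∫ x, w x * nT x ∂σ) :
    (∫ x, φ x (ν x) * |f x - w x| ∂σ) = (∫ x, (f x - w x) * nT x ∂σ) ∧
    ∀ᵐ x ∂σ, f x ≠ w x → φ x (ν x) = Real.sign (f x - w x) * nT x :=
  stmt11_general φ σ ν f w nT IΩ hnT hint1 hint2 hint3 hchain hGG
end
end

section
/- Let φ(x,·) be a norm with 0 ≤ φ(x,ξ) ≤ α|ξ|, and suppose T ∈ (L^∞(Ω))ⁿ satisfies φ⁰(x,T(x)) ≤ 1 a.e. Then the normal trace of T satisfies |[T, ν_Ω]| ≤ φ(x, ν_Ω) ℋ^{n−1}-a.e. on ∂Ω, given that |[T,ν_Ω]| is bounded by the essential supremum of |T·ν| over approach regions; in particular [T,ν_Ω] ≤ φ(x,ν_Ω) and −[T,ν_Ω] ≤ φ(x,−ν_Ω) = φ(x,ν_Ω) ℋ^{n−1}-a.e. -/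
open MeasureTheory
open scoped RealInnerProductSpace ENNReal Topology

noncomputable section

/-- The normal trace `[T,ν_Ω]` of a bounded divergence-free field `T` with
`φ⁰(x,T(x)) ≤ 1` a.e. in `Ω` satisfies `|[T,ν_Ω]| ≤ φ(x,ν_Ω)` (hence both
`[T,ν_Ω] ≤ φ(x,ν_Ω)` and `-[T,ν_Ω] ≤ φ(x,-ν_Ω) = φ(x,ν_Ω)`) `ℋ^{n-1}`-a.e. on `∂Ω`,
given that `|[T,ν_Ω](x)|` is approximated by `|T(y)·ν_Ω(x)|` from interior approach
regions. -/
theorem stmt13 {n : ℕ} (Ω : Set (Euc n)) (hΩo : IsOpen Ω) (hΩb : Bornology.IsBounded Ω)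
    (φ : Euc n → Euc n → ℝ) (α : ℝ) (hα : 0 < α)
    (hφc : ContinuousOn (fun q : Euc n × Euc n => φ q.1 q.2) (closure Ω ×ˢ Set.univ))
    (hnorm : ∀ x ∈ closure Ω, IsNormAt φ x)
    (hbound : ∀ x ∈ closure Ω, ∀ ξ, φ x ξ ≤ α * ‖ξ‖)
    (T : Euc n → Euc n) (CT : ℝ) (hTb : ∀ x, ‖T x‖ ≤ CT)
    (hdual : ∀ x ∈ Ω, dualNorm φ x (T x) ≤ 1)
    (σ : Measure (Euc n)) (ν : Euc n → Euc n)
    (hν : ∀ᵐ x ∂σ, x ∈ frontier Ω ∧ ‖ν x‖ = 1)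
    (nT : Euc n → ℝ)
    -- the normal trace is controlled by values of T·ν on interior approach regions:
    (happrox : ∀ᵐ x ∂σ, ∀ ε > (0:ℝ), ∃ y ∈ Ω ∩ Metric.ball x ε,
      |nT x| ≤ |⟪T y, ν x⟫| + ε) :
    ∀ᵐ x ∂σ, |nT x| ≤ φ x (ν x) ∧ nT x ≤ φ x (ν x) ∧
      -nT x ≤ φ x (-ν x) ∧ φ x (-ν x) = φ x (ν x) := by
  filter_upwards [hν, happrox] with x hx hap
  obtain ⟨hxf, hxn⟩ := hx
  have hxcl : x ∈ closure Ω := frontier_subset_closure hxf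
  -- key: for y ∈ Ω, ⟪T y, ξ⟫ ≤ φ y ξ for all ξ
  have key : ∀ y ∈ Ω, ∀ ξ : Euc n, ⟪T y, ξ⟫ ≤ φ y ξ := by
    intro y hy ξ
    have hycl : y ∈ closure Ω := subset_closure hy
    obtain ⟨h0, hzero, hsmul, hadd⟩ := hnorm y hycl
    -- continuity of φ y
    have hcy : Continuous (fun ξ : Euc n => φ y ξ) := by
      rw [continuous_iff_continuousAt]
      intro ξ'
      have hmem : (closure Ω ×ˢ (Set.univ : Set (Euc n))) ∈ 𝓝 ((y, ξ') : Euc n × Euc n) := by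
        apply Filter.mem_of_superset ((hΩo.prod isOpen_univ).mem_nhds ⟨hy, trivial⟩)
        exact Set.prod_mono subset_closure le_rfl
      have hca : ContinuousAt (fun q : Euc n × Euc n => φ q.1 q.2) (y, ξ') :=
        (hφc (y, ξ') ⟨hycl, trivial⟩).continuousAt hmem
      exact hca.comp ((continuous_const.prodMk continuous_id).continuousAt)
    -- min of φ y on the unit sphere
    have hsph : (Metric.sphere (0 : Euc n) 1).Nonempty := ⟨ν x, by simpa using hxn⟩
    obtain ⟨p₀, hp₀s, hp₀min⟩ := (isCompact_sphere (0 : Euc n) 1).exists_isMinOn hsph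
      hcy.continuousOn
    set c := φ y p₀ with hc
    have hp₀ne : p₀ ≠ 0 := by
      intro h
      have : ‖p₀‖ = 1 := by simpa using hp₀s
      simp [h] at this
    have hcpos : 0 < c := lt_of_le_of_ne (h0 p₀) fun h => hp₀ne ((hzero p₀).mp h.symm)
    have hlow : ∀ p : Euc n, c * ‖p‖ ≤ φ y p := by
      intro p
      rcases eq_or_ne p 0 with rfl | hp
      · simp [(hzero 0).mpr rfl]
      · have hnp : (0:ℝ) < ‖p‖ := norm_pos_iff.mpr hp
        have hu : (‖p‖⁻¹ • p) ∈ Metric.sphere (0 : Euc n) 1 := by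
          simp [norm_smul, abs_of_pos (inv_pos.mpr hnp), inv_mul_cancel₀ hnp.ne']
        have h3 : c ≤ φ y (‖p‖⁻¹ • p) := hp₀min hu
        have heq : φ y (‖p‖⁻¹ • p) = ‖p‖⁻¹ * φ y p := by
          rw [hsmul]; rw [abs_of_pos (inv_pos.mpr hnp)]
        rw [heq] at h3
        calc c * ‖p‖ ≤ (‖p‖⁻¹ * φ y p) * ‖p‖ := by
              apply mul_le_mul_of_nonneg_right h3 hnp.le
          _ = φ y p := by field_simp
    -- the defining set of the dual norm is bounded above
    have hCT : 0 ≤ CT := le_trans (norm_nonneg _) (hTb 0)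
    have hbdd : BddAbove {r | ∃ p : Euc n, φ y p ≤ 1 ∧ r = ⟪T y, p⟫} := by
      refine ⟨CT * c⁻¹, ?_⟩
      rintro r ⟨p, hp, rfl⟩
      have hnp : ‖p‖ ≤ c⁻¹ := by
        have h1 : c * ‖p‖ ≤ 1 := le_trans (hlow p) hp
        have h2 := mul_le_mul_of_nonneg_left h1 (inv_pos.mpr hcpos).le
        rw [← mul_assoc, inv_mul_cancel₀ hcpos.ne', one_mul, mul_one] at h2
        exact h2
      calc ⟪T y, p⟫ ≤ ‖T y‖ * ‖p‖ := real_inner_le_norm _ _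
        _ ≤ CT * c⁻¹ := by
            apply mul_le_mul (hTb y) hnp (norm_nonneg _) hCT
    have hone : ∀ p : Euc n, φ y p ≤ 1 → ⟪T y, p⟫ ≤ 1 := by
      intro p hp
      calc ⟪T y, p⟫ ≤ dualNorm φ y (T y) := le_csSup hbdd ⟨p, hp, rfl⟩
        _ ≤ 1 := hdual y hy
    rcases eq_or_lt_of_le (h0 ξ) with h | h
    · have : ξ = 0 := (hzero ξ).mp h.symm
      simp [this, (hzero 0).mpr rfl]
    · have hp : φ y ((φ y ξ)⁻¹ • ξ) ≤ 1 := by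
        rw [hsmul, abs_of_pos (inv_pos.mpr h), inv_mul_cancel₀ h.ne']
      have := hone _ hp
      rw [real_inner_smul_right] at this
      calc ⟪T y, ξ⟫ = φ y ξ * ((φ y ξ)⁻¹ * ⟪T y, ξ⟫) := by field_simp
        _ ≤ φ y ξ * 1 := by apply mul_le_mul_of_nonneg_left this h.le
        _ = φ y ξ := mul_one _
  -- hence |⟪T y, ν x⟫| ≤ φ y (ν x) for y ∈ Ω
  have key2 : ∀ y ∈ Ω, |⟪T y, ν x⟫| ≤ φ y (ν x) := by
    intro y hy
    obtain ⟨h0, hzero, hsmul, hadd⟩ := hnorm y (subset_closure hy)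
    rw [abs_le]
    constructor
    · have := key y hy (-ν x)
      rw [inner_neg_right] at this
      have hneg : φ y (-ν x) = φ y (ν x) := by
        rw [show -ν x = (-1 : ℝ) • ν x by simp, hsmul]; norm_num
      linarith [hneg ▸ this]
    · exact key y hy (ν x)
  -- main estimate: |nT x| ≤ φ x (ν x)
  have hmain : |nT x| ≤ φ x (ν x) := by
    apply le_of_forall_pos_le_add
    intro δ hδ
    have hcw : ContinuousWithinAt (fun q : Euc n × Euc n => φ q.1 q.2)
        (closure Ω ×ˢ Set.univ) (x, ν x) := hφc (x, ν x) ⟨hxcl, trivial⟩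
    rw [Metric.continuousWithinAt_iff] at hcw
    obtain ⟨ε', hε', hε'c⟩ := hcw (δ/2) (by linarith)
    obtain ⟨y, ⟨hyΩ, hyb⟩, hyle⟩ := hap (min ε' (δ/2)) (by positivity)
    have hdy : dist ((y, ν x) : Euc n × Euc n) (x, ν x) < ε' := by
      rw [Prod.dist_eq]
      simp only [dist_self]
      have hd := Metric.mem_ball.mp hyb
      have : dist y x < ε' := lt_of_lt_of_le hd (min_le_left _ _)
      exact max_lt this hε'
    have hφclose : |φ y (ν x) - φ x (ν x)| < δ/2 := by
      have := hε'c (show ((y, ν x) : Euc n × Euc n) ∈ closure Ω ×ˢ Set.univ from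
        ⟨subset_closure hyΩ, trivial⟩) hdy
      simpa [Real.dist_eq] using this
    have h1 : |nT x| ≤ φ y (ν x) + δ/2 :=
      le_trans hyle (by linarith [key2 y hyΩ, min_le_right ε' (δ/2),
        (abs_lt.mp hφclose).2])
    have h2 : φ y (ν x) ≤ φ x (ν x) + δ/2 := by linarith [(abs_lt.mp hφclose).2]
    linarith
  obtain ⟨h0, hzero, hsmul, hadd⟩ := hnorm x hxcl
  have hneg : φ x (-ν x) = φ x (ν x) := by
    rw [show -ν x = (-1 : ℝ) • ν x by simp, hsmul]; norm_num
  exact ⟨hmain, le_trans (le_abs_self _) hmain,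
    hneg ▸ le_trans (neg_le_abs _) hmain, hneg⟩
end
end

section
/- Let w₁, w₂ ∈ BV(Ω) both satisfy φ(x, Dw_i/|Dw_i|) = T·(Dw_i/|Dw_i|), |Dw_i|-a.e. in Ω, for the same measurable vector field T with φ⁰(x,T) ≤ 1 a.e., and suppose that for a.e. x ∈ Ω the norm φ(x,·) is strictly convex (so the maximizer of p ↦ T(x)·p/φ(x,p) over the unit sphere is unique whenever T(x) ≠ 0). Then on any set where both |Dw₁| and |Dw₂| are mutually absolutely continuous with respect to a common measure and T ≠ 0, the unit vectors Dw₁/|Dw₁| and Dw₂/|Dw₂| coincide a.e., i.e., all such minimizers have the same level set structure. -/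
open MeasureTheory
open scoped RealInnerProductSpace ENNReal Topology

noncomputable section

/-!
Because `φ⁰(x, T) ≤ 1`, the functional `⟪T, ·⟫` is dominated by `φ(x, ·)`, so a Euclidean unit
vector `v` with `φ(x, v) = ⟪T, v⟫` rescales to a point of the sphere `{φ(x, ·) = 1}` at which
`⟪T, ·⟫` attains its maximum `1`. Strict convexity makes that point unique (two such points would
have a midpoint inside the ball where `⟪T, ·⟫` is still `1`), and `‖v‖ = 1` recovers `v` from it.

The domination needs the supremum defining `φ⁰` to be finite (otherwise `sSup` is junk): in finite
dimension the convex function `φ(x, ·)` is continuous, hence bounded below by a multiple of the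
Euclidean norm, so its unit ball is bounded.
-/

section NormedSpace

variable {E : Type*} [NormedAddCommGroup E] [NormedSpace ℝ E] [FiniteDimensional ℝ E]

theorem Seminorm.exists_pos_mul_norm_le (p : Seminorm ℝ E) (hp : ∀ v, p v = 0 → v = 0) :
    ∃ m > 0, ∀ v, m * ‖v‖ ≤ p v := by
  rcases subsingleton_or_nontrivial E with _ | _
  · exact ⟨1, one_pos, fun v => by simp [Subsingleton.elim v 0]⟩
  have hcont : Continuous p := continuousOn_univ.mp (p.convexOn.continuousOn isOpen_univ)
  obtain ⟨z, hz, hmin⟩ := (isCompact_sphere (0 : E) 1).exists_isMinOn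
    (NormedSpace.sphere_nonempty.mpr zero_le_one) hcont.continuousOn
  have hz0 : z ≠ 0 := ne_zero_of_mem_sphere one_ne_zero ⟨z, hz⟩
  refine ⟨p z, (apply_nonneg p z).lt_of_ne fun h => hz0 (hp z h.symm), fun v => ?_⟩
  rcases eq_or_ne v 0 with rfl | hv
  · simp
  have hvpos : 0 < ‖v‖ := norm_pos_iff.mpr hv
  have hu : ‖v‖⁻¹ • v ∈ Metric.sphere (0 : E) 1 := by simp [norm_smul, hv]
  have hmin_v : p z ≤ ‖v‖⁻¹ * p v := by simpa [map_smul_eq_mul] using hmin hu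
  rwa [le_inv_mul_iff₀ hvpos, mul_comm] at hmin_v

end NormedSpace

section InnerProductSpace

variable {E : Type*} [NormedAddCommGroup E] [InnerProductSpace ℝ E]

theorem Seminorm.inner_le_of_forall_le_one (p : Seminorm ℝ E) (hp : ∀ v, p v = 0 → v = 0) {T : E}
    (hT : ∀ v, p v ≤ 1 → ⟪T, v⟫ ≤ 1) (v : E) : ⟪T, v⟫ ≤ p v := by
  rcases eq_or_ne v 0 with rfl | hv
  · simp
  have hpos : 0 < p v := (apply_nonneg p v).lt_of_ne fun h => hv (hp v h.symm)
  have hscaled := hT ((p v)⁻¹ • v) (by rw [map_smul_eq_mul, norm_inv, Real.norm_of_nonneg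
    hpos.le, inv_mul_cancel₀ hpos.ne'])
  rwa [real_inner_smul_right, inv_mul_le_iff₀ hpos, mul_one] at hscaled

theorem eq_of_inner_eq_one_of_strictConvex {f : E → ℝ} {T : E} (hT : ∀ v, ⟪T, v⟫ ≤ f v)
    (hstrict : ∀ p q : E, f p = 1 → f q = 1 → p ≠ q → f ((1/2 : ℝ) • (p + q)) < 1)
    {p q : E} (hp : f p = 1) (hq : f q = 1) (hTp : ⟪T, p⟫ = 1) (hTq : ⟪T, q⟫ = 1) :
    p = q := by
  by_contra hne
  have hmid : ⟪T, (1/2 : ℝ) • (p + q)⟫ = 1 := by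
    rw [real_inner_smul_right, inner_add_right, hTp, hTq]; norm_num
  linarith [hstrict p q hp hq hne, hT ((1/2 : ℝ) • (p + q))]

theorem Seminorm.eq_of_apply_eq_inner (p : Seminorm ℝ E) (hp : ∀ v, p v = 0 → v = 0) {T : E}
    (hT : ∀ v, ⟪T, v⟫ ≤ p v)
    (hstrict : ∀ u w : E, p u = 1 → p w = 1 → u ≠ w → p ((1/2 : ℝ) • (u + w)) < 1)
    {v₁ v₂ : E} (hv₁ : ‖v₁‖ = 1) (hv₂ : ‖v₂‖ = 1) (he₁ : p v₁ = ⟪T, v₁⟫)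
    (he₂ : p v₂ = ⟪T, v₂⟫) : v₁ = v₂ := by
  have hnormalize : ∀ v : E, ‖v‖ = 1 → p v = ⟪T, v⟫ →
      0 < p v ∧ p ((p v)⁻¹ • v) = 1 ∧ ⟪T, (p v)⁻¹ • v⟫ = 1 := by
    intro v hv he
    have hpos : 0 < p v := (apply_nonneg p v).lt_of_ne fun h => by simp [hp v h.symm] at hv
    refine ⟨hpos, ?_, ?_⟩
    · rw [map_smul_eq_mul, norm_inv, Real.norm_of_nonneg hpos.le, inv_mul_cancel₀ hpos.ne']
    · rw [real_inner_smul_right, ← he, inv_mul_cancel₀ hpos.ne']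
  obtain ⟨hpos₁, hp₁, hT₁⟩ := hnormalize v₁ hv₁ he₁
  obtain ⟨hpos₂, hp₂, hT₂⟩ := hnormalize v₂ hv₂ he₂
  have hq : (p v₁)⁻¹ • v₁ = (p v₂)⁻¹ • v₂ :=
    eq_of_inner_eq_one_of_strictConvex hT hstrict hp₁ hp₂ hT₁ hT₂
  have hscale : (p v₁)⁻¹ = (p v₂)⁻¹ := by
    simpa [norm_smul, hv₁, hv₂, abs_of_pos hpos₁, abs_of_pos hpos₂] using congrArg norm hq
  rw [hscale] at hq
  exact smul_right_injective E (inv_ne_zero hpos₂.ne') hq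

end InnerProductSpace

namespace IsNormAt

variable {n : ℕ} {φ : Euc n → Euc n → ℝ} {x : Euc n}

def toSeminorm (h : IsNormAt φ x) : Seminorm ℝ (Euc n) :=
  Seminorm.of (φ x) h.2.2.2 fun c ξ => by rw [h.2.2.1, Real.norm_eq_abs]

theorem inner_le_of_dualNorm_le_one (h : IsNormAt φ x) {T : Euc n} (hd : dualNorm φ x T ≤ 1)
    (v : Euc n) : ⟪T, v⟫ ≤ φ x v := by
  have hdef : ∀ ξ, h.toSeminorm ξ = 0 → ξ = 0 := fun ξ => (h.2.1 ξ).mp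
  obtain ⟨m, hm, hlb⟩ := h.toSeminorm.exists_pos_mul_norm_le hdef
  have hbdd : BddAbove {r | ∃ p : Euc n, φ x p ≤ 1 ∧ r = ⟪T, p⟫} := by
    refine ⟨‖T‖ * m⁻¹, ?_⟩
    rintro r ⟨p, hp, rfl⟩
    have hpn : ‖p‖ ≤ m⁻¹ := by
      rw [← one_div, le_div_iff₀ hm, mul_comm]
      exact (hlb p).trans hp
    exact (real_inner_le_norm T p).trans (mul_le_mul_of_nonneg_left hpn (norm_nonneg T))
  exact h.toSeminorm.inner_le_of_forall_le_one hdef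
    (fun p hp => (le_csSup hbdd ⟨p, hp, rfl⟩).trans hd) v

theorem eq_of_apply_eq_inner (h : IsNormAt φ x)
    (hstrict : ∀ p q : Euc n, φ x p = 1 → φ x q = 1 → p ≠ q → φ x ((1/2 : ℝ) • (p + q)) < 1)
    {T : Euc n} (hd : dualNorm φ x T ≤ 1) {v₁ v₂ : Euc n} (hv₁ : ‖v₁‖ = 1) (hv₂ : ‖v₂‖ = 1)
    (he₁ : φ x v₁ = ⟪T, v₁⟫) (he₂ : φ x v₂ = ⟪T, v₂⟫) : v₁ = v₂ :=
  h.toSeminorm.eq_of_apply_eq_inner (fun ξ => (h.2.1 ξ).mp) (h.inner_le_of_dualNorm_le_one hd)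
    hstrict hv₁ hv₂ he₁ he₂

end IsNormAt

theorem stmt18_general {n : ℕ} (Ω : Set (Euc n))
    (φ : Euc n → Euc n → ℝ)
    (hnorm : ∀ x ∈ Ω, IsNormAt φ x)
    -- strict convexity of each norm φ(x,·)
    (hstrict : ∀ x ∈ Ω, ∀ p q : Euc n, φ x p = 1 → φ x q = 1 → p ≠ q →
      φ x ((1/2 : ℝ) • (p + q)) < 1)
    (T : Euc n → Euc n)
    (hdual : ∀ x ∈ Ω, dualNorm φ x (T x) ≤ 1)
    (μ Dw1Abs Dw2Abs : Measure (Euc n))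
    (h1 : μ ≪ Dw1Abs) (h2 : μ ≪ Dw2Abs)
    (v1 v2 : Euc n → Euc n)
    (hv1 : ∀ᵐ x ∂Dw1Abs, x ∈ Ω ∧ ‖v1 x‖ = 1 ∧ φ x (v1 x) = ⟪T x, v1 x⟫)
    (hv2 : ∀ᵐ x ∂Dw2Abs, x ∈ Ω ∧ ‖v2 x‖ = 1 ∧ φ x (v2 x) = ⟪T x, v2 x⟫) :
    ∀ᵐ x ∂μ, T x ≠ 0 → v1 x = v2 x := by
  filter_upwards [h1.ae_le hv1, h2.ae_le hv2] with x ⟨hxΩ, hn1, he1⟩ ⟨_, hn2, he2⟩ _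
  exact (hnorm x hxΩ).eq_of_apply_eq_inner (hstrict x hxΩ) (hdual x hxΩ) hn1 hn2 he1 he2

/-- If two BV functions `w₁, w₂` (with polar decompositions `Dwᵢ = vᵢ |Dwᵢ|`) both
satisfy the calibration identity `φ(x, vᵢ(x)) = T(x)·vᵢ(x)` for the same field `T`
with `φ⁰(x,T) ≤ 1`, and `φ(x,·)` is strictly convex, then wherever `|Dw₁|` and
`|Dw₂|` are mutually absolutely continuous with respect to a common measure `μ` and
`T ≠ 0`, the unit directions agree: `v₁ = v₂` `μ`-a.e. -/
theorem stmt18 {n : ℕ} (Ω : Set (Euc n)) (hΩo : IsOpen Ω) (hΩb : Bornology.IsBounded Ω)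
    (φ : Euc n → Euc n → ℝ)
    (hnorm : ∀ x ∈ Ω, IsNormAt φ x)
    -- strict convexity of each norm φ(x,·)
    (hstrict : ∀ x ∈ Ω, ∀ p q : Euc n, φ x p = 1 → φ x q = 1 → p ≠ q →
      φ x ((1/2 : ℝ) • (p + q)) < 1)
    (T : Euc n → Euc n) (CT : ℝ) (hTb : ∀ x, ‖T x‖ ≤ CT)
    (hdual : ∀ x ∈ Ω, dualNorm φ x (T x) ≤ 1)
    (μ Dw1Abs Dw2Abs : Measure (Euc n))
    (h1 : μ ≪ Dw1Abs) (h1' : Dw1Abs ≪ μ) (h2 : μ ≪ Dw2Abs) (h2' : Dw2Abs ≪ μ)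
    (v1 v2 : Euc n → Euc n)
    (hv1 : ∀ᵐ x ∂Dw1Abs, x ∈ Ω ∧ ‖v1 x‖ = 1 ∧ φ x (v1 x) = ⟪T x, v1 x⟫)
    (hv2 : ∀ᵐ x ∂Dw2Abs, x ∈ Ω ∧ ‖v2 x‖ = 1 ∧ φ x (v2 x) = ⟪T x, v2 x⟫) :
    ∀ᵐ x ∂μ, T x ≠ 0 → v1 x = v2 x :=
  stmt18_general Ω φ hnorm hstrict T hdual μ Dw1Abs Dw2Abs h1 h2 v1 v2 hv1 hv2
end
end
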